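/- arXiv:1201.4825 — 3 statements merged into one kernel-verified Lean document; each statement's English description precedes it below -/
import Mathlib

section
/- Let a : ℝ² → ℝ² be given by a(x₁,x₂) = (|x₂|^α, 0) for 0 < α < 1, and define u(x₁,x₂) = x₁ + ∫₀^{x₂} √(2|t|^α − |t|^{2α}) dt. Then for all x with |x₂| ≤ 1, the gradient of u satisfies |∇u(x) − a(x)|² = 1. -/
open Real

lemma continuous_sqrt_two_mul_abs_rpow_sub {α : ℝ} (hα : 0 ≤ α) :
    Continuous fun t : ℝ => √(2 * |t| ^ α - |t| ^ (2 * α)) := by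
  have h2α : 0 ≤ 2 * α := by positivity
  fun_prop (disch := assumption)

lemma hasFDerivAt_fst_add_integral {f : ℝ → ℝ} (hf : Continuous f) (x : ℝ × ℝ) :
    HasFDerivAt (fun p : ℝ × ℝ => p.1 + ∫ t in (0 : ℝ)..p.2, f t)
      (ContinuousLinearMap.fst ℝ ℝ ℝ + f x.2 • ContinuousLinearMap.snd ℝ ℝ ℝ) x :=
  hasFDerivAt_fst.add <|
    (hf.integral_hasStrictDerivAt 0 x.2).hasDerivAt.comp_hasFDerivAt x hasFDerivAt_snd

lemma one_sub_sq_add_sqrt_sq {s : ℝ} (hs₀ : 0 ≤ s) (hs₂ : s ≤ 2) :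
    (1 - s) ^ 2 + √(2 * s - s ^ 2) ^ 2 = 1 := by
  rw [sq_sqrt (by nlinarith)]
  ring

/-- For `a(x₁,x₂) = (|x₂|^α, 0)` and
`u(x₁,x₂) = x₁ + ∫₀^{x₂} √(2|t|^α − |t|^{2α}) dt`, for all `x` with `|x₂| ≤ 1`,
`u` is differentiable and `|∇u(x) − a(x)|² = 1`. -/
theorem stmt0 (α : ℝ) (hα : 0 < α ∧ α < 1)
    (u : ℝ × ℝ → ℝ)
    (hu : ∀ x : ℝ × ℝ,
      u x = x.1 + ∫ t in (0:ℝ)..x.2, Real.sqrt (2 * |t| ^ α - |t| ^ (2 * α)))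
    (x : ℝ × ℝ) (hx : |x.2| ≤ 1) :
    DifferentiableAt ℝ u x ∧
      (fderiv ℝ u x (1, 0) - |x.2| ^ α) ^ 2 + (fderiv ℝ u x (0, 1)) ^ 2 = 1 := by
  obtain rfl : u = _ := funext hu
  have hU := hasFDerivAt_fst_add_integral (continuous_sqrt_two_mul_abs_rpow_sub hα.1.le) x
  refine ⟨hU.differentiableAt, ?_⟩
  have hs₁ : |x.2| ^ α ≤ 1 := rpow_le_one (abs_nonneg _) hx hα.1.le
  have hsq : |x.2| ^ (2 * α) = (|x.2| ^ α) ^ 2 := by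
    rw [mul_comm, rpow_mul (abs_nonneg _), rpow_two]
  simpa [hU.fderiv, hsq] using
    one_sub_sq_add_sqrt_sq (rpow_nonneg (abs_nonneg x.2) α) (by linarith)
end

section
/- Suppose h : B₁ → ℝ is Lipschitz, h(0) = 0, h(x) ≥ −C₁|x|^{1+β} for all x ∈ B₁, and for every x⁰ ∈ B₁ and every p in the super-differential of h at x⁰ one has h(x⁰ + x) ≤ h(x⁰) + p·x + C₀|x|^{1+β} for all x with x⁰ + x ∈ B₁. Then there exists a constant E(β), depending continuously on β ∈ (0,1), such that for every y ∈ B_{1/2} and every p in the super-differential of h at y, |p| ≤ E(β)(C₀ + C₁)|y|^β. -/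
open Metric

/-- The super-differential of `h` at `x₀` relative to the set `Ω`:
`p ∈ S⁺(h,x₀)` iff `h(x₀+x) ≤ h(x₀) + ⟪p,x⟫ + o(|x|)` as `x → 0` within `Ω`. -/
def superDiff {n : ℕ} (h : EuclideanSpace ℝ (Fin n) → ℝ)
    (Ω : Set (EuclideanSpace ℝ (Fin n))) (x₀ : EuclideanSpace ℝ (Fin n)) :
    Set (EuclideanSpace ℝ (Fin n)) :=
  {p | ∀ ε > 0, ∃ δ > 0, ∀ x : EuclideanSpace ℝ (Fin n), ‖x‖ < δ → x₀ + x ∈ Ω →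
    h (x₀ + x) ≤ h x₀ + (inner ℝ p x : ℝ) + ε * ‖x‖}

/-!
Stepping from `x₀` a distance `t` against a super-differential `q` and comparing with the lower
bound `h ≥ -C₁|x|^{1+β}` gives `t|q| ≤ h(x₀) + C₁(|x₀| + t)^{1+β} + C₀ t^{1+β}`. At `y ≠ 0`, with
`t = |y|`, this reduces the claim to an upper bound `h(y) ≤ (2C₀ + C₁)|y|^{1+β}`. For that, touch
`h` from above by steep paraboloids to get points `x₀ → 0` with super-differentials `q`; the same
estimate bounds `|q|` by `O(|y|^β)`, and the one-sided estimate at `x₀` carries `h(x₀) ≈ h(0) = 0`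
over to `y`. At `y = 0` the estimate forces `p = 0`. So `E ≡ 5` works.
-/

open Filter Topology

lemma LipschitzOnWith.apply_le_mul_norm {E : Type*} [SeminormedAddCommGroup E] {h : E → ℝ}
    {s : Set E} {L : NNReal} (hL : LipschitzOnWith L h s) (h0s : 0 ∈ s) (h0 : h 0 = 0) {z : E}
    (hz : z ∈ s) : h z ≤ L * ‖z‖ := by
  have := hL.dist_le_mul z hz 0 h0s
  rw [Real.dist_eq, h0, sub_zero, dist_zero_right] at this
  exact (le_abs_self _).trans this

section InnerProductSpace

variable {E : Type*} [NormedAddCommGroup E] [InnerProductSpace ℝ E]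

def IsUpperSupport (h : E → ℝ) (Ω : Set E) (C γ : ℝ) (x₀ p : E) : Prop :=
  ∀ x, x₀ + x ∈ Ω → h (x₀ + x) ≤ h x₀ + inner ℝ p x + C * ‖x‖ ^ γ

variable {h : E → ℝ} {C₀ C₁ γ R : ℝ} {x₀ q : E}

namespace IsUpperSupport

lemma le_add_norm_mul {Ω : Set E} (hq : IsUpperSupport h Ω C₀ γ x₀ q) {z : E} (hz : z ∈ Ω) :
    h z ≤ h x₀ + ‖q‖ * ‖z - x₀‖ + C₀ * ‖z - x₀‖ ^ γ := by
  have hz' : x₀ + (z - x₀) = z := add_sub_cancel x₀ z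
  have := hq (z - x₀) (hz'.symm ▸ hz)
  rw [hz'] at this
  linarith [real_inner_le_norm q (z - x₀)]

lemma mul_norm_le (hq : IsUpperSupport h (ball 0 R) C₀ γ x₀ q)
    (hlow : ∀ x ∈ ball (0 : E) R, -C₁ * ‖x‖ ^ γ ≤ h x) (hC₀ : 0 ≤ C₀) (hC₁ : 0 ≤ C₁)
    (hγ : 0 ≤ γ) {t : ℝ} (ht : 0 ≤ t) (hx₀t : ‖x₀‖ + t < R) :
    t * ‖q‖ ≤ h x₀ + C₁ * (‖x₀‖ + t) ^ γ + C₀ * t ^ γ := by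
  set x : E := -((t / ‖q‖) • q)
  have hx : ‖x‖ ≤ t := by
    rw [norm_neg, norm_smul, Real.norm_of_nonneg (by positivity)]
    rcases eq_or_ne ‖q‖ 0 with hq0 | hq0
    · simpa [hq0] using ht
    · rw [div_mul_cancel₀ _ hq0]
  have hinner : inner ℝ q x = -(t * ‖q‖) := by
    rw [inner_neg_right, real_inner_smul_right, real_inner_self_eq_norm_mul_norm]
    rcases eq_or_ne ‖q‖ 0 with hq0 | hq0
    · simp [hq0]
    · field_simp
  have hx₀x : ‖x₀ + x‖ ≤ ‖x₀‖ + t := (norm_add_le _ _).trans (by linarith)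
  have hmem : x₀ + x ∈ ball (0 : E) R := mem_ball_zero_iff.2 (hx₀x.trans_lt hx₀t)
  have hup := hq x hmem
  have hlo := hlow _ hmem
  have h1 : C₁ * ‖x₀ + x‖ ^ γ ≤ C₁ * (‖x₀‖ + t) ^ γ := by gcongr
  have h2 : C₀ * ‖x‖ ^ γ ≤ C₀ * t ^ γ := by gcongr
  linarith

lemma eq_zero_at_zero (hq : IsUpperSupport h (ball 0 R) C₀ γ 0 q) (h0 : h 0 = 0)
    (hlow : ∀ x ∈ ball (0 : E) R, -C₁ * ‖x‖ ^ γ ≤ h x) (hC₀ : 0 ≤ C₀) (hC₁ : 0 ≤ C₁)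
    (hγ : 1 < γ) (hR : 0 < R) : q = 0 := by
  have hbound : ∀ t ∈ Set.Ioo 0 R, ‖q‖ ≤ (C₀ + C₁) * t ^ (γ - 1) := by
    rintro t ⟨ht, htR⟩
    have := hq.mul_norm_le hlow hC₀ hC₁ (by linarith) ht.le (by simpa using htR)
    rw [h0, norm_zero, zero_add, zero_add] at this
    rw [Real.rpow_sub_one ht.ne', mul_div_assoc', le_div_iff₀ ht]
    linarith
  have hlim : Tendsto (fun t : ℝ => (C₀ + C₁) * t ^ (γ - 1)) (𝓝[>] 0) (𝓝 0) := by
    have hc : ContinuousAt (fun t : ℝ => (C₀ + C₁) * t ^ (γ - 1)) 0 :=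
      continuousAt_const.mul (Real.continuousAt_rpow_const 0 (γ - 1) (.inr (by linarith)))
    have := hc.tendsto.mono_left (nhdsWithin_le_nhds (s := Set.Ioi 0))
    rwa [Real.zero_rpow (by linarith), mul_zero] at this
  have := ge_of_tendsto hlim (eventually_of_mem (Ioo_mem_nhdsGT hR) hbound)
  exact norm_le_zero_iff.1 this

lemma apply_le (hq : IsUpperSupport h (ball 0 R) C₀ γ x₀ q)
    (hlow : ∀ x ∈ ball (0 : E) R, -C₁ * ‖x‖ ^ γ ≤ h x) (hC₀ : 0 ≤ C₀) (hC₁ : 0 ≤ C₁)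
    (hγ : 0 ≤ γ) {y : E} (hy : 0 < ‖y‖) (hx₀y : ‖x₀‖ + ‖y‖ < R) :
    h y ≤ h x₀ + (‖x₀‖ + ‖y‖) / ‖y‖ * (h x₀ + C₁ * (‖x₀‖ + ‖y‖) ^ γ + C₀ * ‖y‖ ^ γ)
      + C₀ * (‖x₀‖ + ‖y‖) ^ γ := by
  have hyx₀ : ‖y - x₀‖ ≤ ‖x₀‖ + ‖y‖ := (norm_sub_le _ _).trans_eq (add_comm _ _)
  have hq_norm := hq.mul_norm_le hlow hC₀ hC₁ hγ hy.le hx₀y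
  have hslope : ‖q‖ * ‖y - x₀‖
      ≤ (‖x₀‖ + ‖y‖) / ‖y‖ * (h x₀ + C₁ * (‖x₀‖ + ‖y‖) ^ γ + C₀ * ‖y‖ ^ γ) := by
    calc ‖q‖ * ‖y - x₀‖ ≤ ‖q‖ * (‖x₀‖ + ‖y‖) := by gcongr
      _ = (‖x₀‖ + ‖y‖) / ‖y‖ * (‖y‖ * ‖q‖) := by field_simp
      _ ≤ _ := by gcongr
  have hy_mem : y ∈ ball (0 : E) R := mem_ball_zero_iff.2 (by linarith [norm_nonneg x₀])
  calc h y ≤ h x₀ + ‖q‖ * ‖y - x₀‖ + C₀ * ‖y - x₀‖ ^ γ := hq.le_add_norm_mul hy_mem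
    _ ≤ _ := by gcongr

lemma norm_le {β : ℝ} {y p : E} (hp : IsUpperSupport h (ball 0 1) C₀ (1 + β) y p)
    (hlow : ∀ x ∈ ball (0 : E) 1, -C₁ * ‖x‖ ^ (1 + β) ≤ h x) (hC₀ : 0 ≤ C₀) (hC₁ : 0 ≤ C₁)
    (hβ0 : 0 ≤ β) (hβ1 : β ≤ 1) (hy0 : 0 < ‖y‖) (hy : ‖y‖ < 1 / 2)
    (hhy : h y ≤ (2 * C₀ + C₁) * ‖y‖ ^ (1 + β)) : ‖p‖ ≤ 5 * (C₀ + C₁) * ‖y‖ ^ β := by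
  have hstep := hp.mul_norm_le hlow hC₀ hC₁ (by linarith) hy0.le (by linarith)
  have htwo : (‖y‖ + ‖y‖) ^ (1 + β) ≤ 4 * ‖y‖ ^ (1 + β) := by
    rw [← two_mul, Real.mul_rpow zero_le_two hy0.le]
    gcongr
    calc (2 : ℝ) ^ (1 + β) ≤ 2 ^ (2 : ℝ) :=
          Real.rpow_le_rpow_of_exponent_le one_le_two (by linarith)
      _ = 4 := by norm_num
  rw [Real.rpow_add hy0, Real.rpow_one] at hstep htwo hhy
  have hC₁two : C₁ * (‖y‖ + ‖y‖) ^ (1 + β) ≤ C₁ * (4 * (‖y‖ * ‖y‖ ^ β)) := by gcongr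
  have : 0 ≤ C₀ * (‖y‖ * ‖y‖ ^ β) := by positivity
  refine le_of_mul_le_mul_left ?_ hy0
  linarith

end IsUpperSupport

end InnerProductSpace

section EuclideanSpace

variable {n : ℕ} {h : EuclideanSpace ℝ (Fin n) → ℝ} {Ω : Set (EuclideanSpace ℝ (Fin n))}

lemma smul_mem_superDiff_of_isLocalMax {x₀ : EuclideanSpace ℝ (Fin n)} {K : ℝ} (hK : 0 ≤ K)
    (hmax : IsLocalMax (fun z => h z - K * ‖z‖ ^ 2) x₀) : (2 * K) • x₀ ∈ superDiff h Ω x₀ := by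
  intro ε hε
  obtain ⟨δ, hδ, hball⟩ := Metric.eventually_nhds_iff_ball.1 hmax
  refine ⟨min δ (ε / (K + 1)), lt_min hδ (by positivity), fun x hx _ => ?_⟩
  have hxδ : x₀ + x ∈ ball x₀ δ := by
    simpa [mem_ball, dist_eq_norm] using hx.trans_le (min_le_left _ _)
  have hxε : ‖x‖ * (K + 1) ≤ ε :=
    (le_div_iff₀ (by positivity)).1 (hx.trans_le (min_le_right _ _)).le
  have hmax' : h (x₀ + x) - K * ‖x₀ + x‖ ^ 2 ≤ h x₀ - K * ‖x₀‖ ^ 2 := hball _ hxδ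
  have hquad : K * ‖x‖ ^ 2 ≤ ε * ‖x‖ := by nlinarith [norm_nonneg x]
  rw [norm_add_sq_real] at hmax'
  rw [real_inner_smul_left]
  linarith

/-- Touching `h` from above by a steep paraboloid `c + K‖z‖²` produces super-differentials
arbitrarily close to the origin. -/
lemma exists_superDiff_nonempty_of_lipschitzOnWith {L : NNReal} {R ρ : ℝ}
    (hL : LipschitzOnWith L h (closedBall 0 R)) (h0 : h 0 = 0) (hρ : 0 < ρ) (hρR : ρ < R) :
    ∃ x₀, ‖x₀‖ < ρ ∧ (superDiff h Ω x₀).Nonempty := by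
  set K : ℝ := (L + 1) / ρ
  have hK : 0 < K := by positivity
  have hKρ : K * ρ = L + 1 := div_mul_cancel₀ _ hρ.ne'
  have hcont : ContinuousOn (fun z => h z - K * ‖z‖ ^ 2) (closedBall 0 R) :=
    hL.continuousOn.sub (by fun_prop)
  obtain ⟨x₀, hx₀, hmax⟩ := (isCompact_closedBall (0 : EuclideanSpace ℝ (Fin n)) R).exists_isMaxOn
    ⟨0, mem_closedBall_self (by linarith)⟩ hcont
  have hx₀ρ : ‖x₀‖ < ρ := by
    have hcmp : h 0 - K * ‖(0 : EuclideanSpace ℝ (Fin n))‖ ^ 2 ≤ h x₀ - K * ‖x₀‖ ^ 2 :=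
      hmax (mem_closedBall_self (by linarith))
    have hlip := hL.apply_le_mul_norm (mem_closedBall_self (by linarith)) h0 hx₀
    rw [h0, norm_zero] at hcmp
    by_contra! hρx₀
    have hsteep : (L + 1) * ‖x₀‖ ≤ K * ‖x₀‖ ^ 2 := by
      rw [← hKρ, sq, ← mul_assoc]
      gcongr
    linarith
  have hx₀R : x₀ ∈ ball 0 R := mem_ball_zero_iff.2 (by linarith)
  exact ⟨x₀, hx₀ρ, _, smul_mem_superDiff_of_isLocalMax hK.le
    (hmax.isLocalMax (closedBall_mem_nhds_of_mem hx₀R))⟩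

lemma apply_le_of_forall_isUpperSupport {L : NNReal} {C₀ C₁ γ : ℝ}
    (hL : LipschitzOnWith L h (ball 0 1)) (h0 : h 0 = 0)
    (hlow : ∀ x ∈ ball (0 : EuclideanSpace ℝ (Fin n)) 1, -C₁ * ‖x‖ ^ γ ≤ h x)
    (hsemi : ∀ x₀ ∈ ball (0 : EuclideanSpace ℝ (Fin n)) 1, ∀ q ∈ superDiff h (ball 0 1) x₀,
      IsUpperSupport h (ball 0 1) C₀ γ x₀ q)
    (hC₀ : 0 ≤ C₀) (hC₁ : 0 ≤ C₁) (hγ : 0 ≤ γ) {y : EuclideanSpace ℝ (Fin n)} (hy0 : 0 < ‖y‖)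
    (hy : ‖y‖ < 1 / 2) : h y ≤ (2 * C₀ + C₁) * ‖y‖ ^ γ := by
  set r := ‖y‖
  -- `G s` bounds `h y` through any super-differential at a point of norm `s`
  set G : ℝ → ℝ := fun s =>
    L * s + (s + r) / r * (L * s + C₁ * (s + r) ^ γ + C₀ * r ^ γ) + C₀ * (s + r) ^ γ
  have hG : ContinuousAt G 0 := by
    have hr : (0 : ℝ) + r ≠ 0 := by rw [zero_add]; exact hy0.ne'
    have : ContinuousAt (fun s : ℝ => (s + r) ^ γ) 0 :=
      (continuousAt_id.add continuousAt_const).rpow_const (.inl hr)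
    fun_prop
  have hG0 : G 0 = (2 * C₀ + C₁) * r ^ γ := by
    simp only [G, mul_zero, zero_add, div_self hy0.ne', one_mul]
    ring
  rw [← hG0]
  refine ge_of_tendsto_of_frequently hG.tendsto (frequently_iff.2 fun {U} hU => ?_)
  obtain ⟨ρ, hρ, hρU⟩ := Metric.mem_nhds_iff.1 hU
  obtain ⟨x₀, hx₀ρ, q, hq⟩ := exists_superDiff_nonempty_of_lipschitzOnWith (Ω := ball 0 1)
    (hL.mono (closedBall_subset_ball (by norm_num : (3 / 4 : ℝ) < 1))) h0
    (lt_min hρ (by norm_num : (0 : ℝ) < 1 / 4)) ((min_le_right _ _).trans_lt (by norm_num))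
  have hx₀ : ‖x₀‖ < 1 / 4 := hx₀ρ.trans_le (min_le_right _ _)
  have hx₀1 : x₀ ∈ ball 0 1 := mem_ball_zero_iff.2 (by linarith)
  refine ⟨‖x₀‖, hρU (by simpa using hx₀ρ.trans_le (min_le_left _ _)), ?_⟩
  have hx₀L := hL.apply_le_mul_norm (mem_ball_self one_pos) h0 hx₀1
  calc h y ≤ h x₀ + (‖x₀‖ + r) / r * (h x₀ + C₁ * (‖x₀‖ + r) ^ γ + C₀ * r ^ γ)
        + C₀ * (‖x₀‖ + r) ^ γ :=
        (hsemi x₀ hx₀1 q hq).apply_le hlow hC₀ hC₁ hγ hy0 (by linarith)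
    _ ≤ G ‖x₀‖ := by
        simp only [G]
        gcongr

end EuclideanSpace

/-- one-sided `C^{1,β}` estimates plus a lower bound `h ≥ −C₁|x|^{1+β}`
and `h(0)=0` force `|p| ≤ E(β)(C₀+C₁)|y|^β` for every `p` in the super-differential of
`h` at `y ∈ B_{1/2}`, where `E` depends continuously on `β ∈ (0,1)`. -/
theorem stmt2 (n : ℕ) :
    ∃ E : ℝ → ℝ, ContinuousOn E (Set.Ioo (0:ℝ) 1) ∧
      ∀ (β : ℝ), β ∈ Set.Ioo (0:ℝ) 1 →
      ∀ (C₀ C₁ : ℝ), 0 ≤ C₀ → 0 ≤ C₁ →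
      ∀ (h : EuclideanSpace ℝ (Fin n) → ℝ) (L : NNReal),
        LipschitzOnWith L h (ball (0 : EuclideanSpace ℝ (Fin n)) 1) →
        h 0 = 0 →
        (∀ x ∈ ball (0 : EuclideanSpace ℝ (Fin n)) 1, -C₁ * ‖x‖ ^ (1 + β) ≤ h x) →
        (∀ x₀ ∈ ball (0 : EuclideanSpace ℝ (Fin n)) 1,
          ∀ p ∈ superDiff h (ball 0 1) x₀,
          ∀ x : EuclideanSpace ℝ (Fin n), x₀ + x ∈ ball (0 : EuclideanSpace ℝ (Fin n)) 1 →
            h (x₀ + x) ≤ h x₀ + (inner ℝ p x : ℝ) + C₀ * ‖x‖ ^ (1 + β)) →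
        ∀ y ∈ ball (0 : EuclideanSpace ℝ (Fin n)) (1/2),
          ∀ p ∈ superDiff h (ball 0 1) y,
            ‖p‖ ≤ E β * (C₀ + C₁) * ‖y‖ ^ β := by
  refine ⟨fun _ => 5, continuousOn_const, ?_⟩
  rintro β ⟨hβ0, hβ1⟩ C₀ C₁ hC₀ hC₁ h L hL h0 hlow hsemi y hy p hp
  have hy1 : y ∈ ball (0 : EuclideanSpace ℝ (Fin n)) 1 := ball_subset_ball (by norm_num) hy
  have hyp : IsUpperSupport h (ball 0 1) C₀ (1 + β) y p := hsemi y hy1 p hp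
  rcases eq_or_ne y 0 with rfl | hy0
  · rw [hyp.eq_zero_at_zero h0 hlow hC₀ hC₁ (by linarith) one_pos, norm_zero,
      Real.zero_rpow hβ0.ne', mul_zero]
  · have hhy := apply_le_of_forall_isUpperSupport hL h0 hlow hsemi hC₀ hC₁ (by linarith)
      (norm_pos_iff.2 hy0) (mem_ball_zero_iff.1 hy)
    exact hyp.norm_le hlow hC₀ hC₁ hβ0.le hβ1.le (norm_pos_iff.2 hy0) (mem_ball_zero_iff.1 hy) hhy
end

section
/- Let h : B₁ → ℝ satisfy h(0) = 0, h(x) ≥ −C₁|x|^{1+β} for all x, and the one-sided estimate h(x) ≤ p·x + C₀|x|^{1+β} for every p in the super-differential of h at 0. Then the super-differential of h at 0 contains only the zero vector. -/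
/-!
If `p ≠ 0`, move from `0` in the direction `-p`: the super-differential inequality makes `h`
decrease at the linear rate `‖p‖`, whereas the lower bound `h x ≥ -C₁ ‖x‖ ^ (1 + β)` only allows
a decrease of order `o(‖x‖)`.
-/

open Metric

open Filter Topology Asymptotics

theorem norm_le_of_eventually_neg_mul_norm_le_inner {E : Type*} [NormedAddCommGroup E]
    [InnerProductSpace ℝ E] {p : E} {c : ℝ} (hc : 0 ≤ c)
    (hp : ∀ᶠ x in 𝓝 0, -(c * ‖x‖) ≤ inner ℝ p x) : ‖p‖ ≤ c := by
  have hpath : Tendsto (fun t : ℝ => -t • p) (𝓝[>] 0) (𝓝 0) := by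
    have hcont : Continuous fun t : ℝ => -t • p := by fun_prop
    exact (hcont.tendsto' 0 0 (by simp)).mono_left nhdsWithin_le_nhds
  obtain ⟨t, hpt, ht⟩ := ((hpath.eventually hp).and self_mem_nhdsWithin).exists
  rw [norm_smul, real_inner_smul_right, real_inner_self_eq_norm_sq, norm_neg,
    Real.norm_of_nonneg (le_of_lt ht)] at hpt
  rcases (norm_nonneg p).eq_or_lt with hp0 | hp0
  · rw [← hp0]; exact hc
  · nlinarith [mul_pos ht hp0]

theorem eventually_le_of_mem_superDiff {n : ℕ} {h : EuclideanSpace ℝ (Fin n) → ℝ}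
    {Ω : Set (EuclideanSpace ℝ (Fin n))} {x₀ p : EuclideanSpace ℝ (Fin n)}
    (hp : p ∈ superDiff h Ω x₀) {ε : ℝ} (hε : 0 < ε) :
    ∀ᶠ x in 𝓝 0, x₀ + x ∈ Ω → h (x₀ + x) ≤ h x₀ + inner ℝ p x + ε * ‖x‖ := by
  obtain ⟨δ, hδ, hle⟩ := hp ε hε
  filter_upwards [ball_mem_nhds 0 hδ] with x hx
  exact hle x (mem_ball_zero_iff.mp hx)

theorem eq_zero_of_mem_superDiff_of_isLittleO {n : ℕ} {h g : EuclideanSpace ℝ (Fin n) → ℝ}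
    {Ω : Set (EuclideanSpace ℝ (Fin n))} {p : EuclideanSpace ℝ (Fin n)} (hΩ : Ω ∈ 𝓝 0)
    (h0 : h 0 = 0) (hg : g =o[𝓝 0] (‖·‖)) (hlow : ∀ᶠ x in 𝓝 0, -g x ≤ h x)
    (hp : p ∈ superDiff h Ω 0) : p = 0 := by
  refine norm_le_zero_iff.mp (le_of_forall_pos_le_add fun ε hε => ?_)
  have hε2 : 0 < ε / 2 := half_pos hε
  have hinner : ∀ᶠ x in 𝓝 0, -(ε * ‖x‖) ≤ inner ℝ p x := by
    filter_upwards [hΩ, hlow, hg.def hε2, eventually_le_of_mem_superDiff hp hε2]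
      with x hxΩ hxlow hxg hxup
    rw [zero_add, h0] at hxup
    rw [Real.norm_eq_abs, norm_norm] at hxg
    linarith [hxup hxΩ, le_abs_self (g x)]
  linarith [norm_le_of_eventually_neg_mul_norm_le_inner hε.le hinner]

theorem isLittleO_mul_norm_rpow_one_add {E : Type*} [SeminormedAddCommGroup E] (C : ℝ) {β : ℝ}
    (hβ : 0 < β) : (fun x : E => C * ‖x‖ ^ (1 + β)) =o[𝓝 0] (‖·‖) := by
  have hsmall : Tendsto (fun x : E => C * ‖x‖ ^ β) (𝓝 0) (𝓝 0) := by
    have hcont : Continuous fun x : E => C * ‖x‖ ^ β :=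
      continuous_const.mul (continuous_norm.rpow_const fun _ => Or.inr hβ.le)
    simpa [Real.zero_rpow hβ.ne'] using hcont.tendsto 0
  have := (isLittleO_one_iff ℝ).mpr hsmall |>.mul_isBigO (isBigO_refl (‖·‖) (𝓝 (0 : E)))
  refine (this.congr_left fun x => ?_).congr_right fun x => one_mul _
  rw [Real.rpow_add' (norm_nonneg x) (by linarith), Real.rpow_one]
  ring

theorem stmt3_general (n : ℕ) (β : ℝ) (hβ : β ∈ Set.Ioo (0:ℝ) 1)
    (C₁ : ℝ)
    (h : EuclideanSpace ℝ (Fin n) → ℝ)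
    (h0 : h 0 = 0)
    (hlow : ∀ x ∈ ball (0 : EuclideanSpace ℝ (Fin n)) 1, -C₁ * ‖x‖ ^ (1 + β) ≤ h x) :
    ∀ p ∈ superDiff h (ball 0 1) 0, p = 0 := by
  intro p hp
  have hlow_near : ∀ᶠ x in 𝓝 0, -(C₁ * ‖x‖ ^ (1 + β)) ≤ h x := by
    filter_upwards [ball_mem_nhds 0 one_pos] with x hx
    simpa [neg_mul] using hlow x hx
  exact eq_zero_of_mem_superDiff_of_isLittleO (ball_mem_nhds 0 one_pos) h0
    (isLittleO_mul_norm_rpow_one_add C₁ hβ.1) hlow_near hp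

/-- if `h(0) = 0`, `h(x) ≥ −C₁|x|^{1+β}`, and
`h(x) ≤ p·x + C₀|x|^{1+β}` for every `p` in the super-differential of `h` at `0`,
then the super-differential of `h` at `0` contains only the zero vector. -/
theorem stmt3 (n : ℕ) (β : ℝ) (hβ : β ∈ Set.Ioo (0:ℝ) 1)
    (C₀ C₁ : ℝ) (hC₀ : 0 ≤ C₀) (hC₁ : 0 ≤ C₁)
    (h : EuclideanSpace ℝ (Fin n) → ℝ)
    (h0 : h 0 = 0)
    (hlow : ∀ x ∈ ball (0 : EuclideanSpace ℝ (Fin n)) 1, -C₁ * ‖x‖ ^ (1 + β) ≤ h x)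
    (hup : ∀ p ∈ superDiff h (ball 0 1) 0,
      ∀ x ∈ ball (0 : EuclideanSpace ℝ (Fin n)) 1,
        h x ≤ (inner ℝ p x : ℝ) + C₀ * ‖x‖ ^ (1 + β)) :
    ∀ p ∈ superDiff h (ball 0 1) 0, p = 0 :=
  stmt3_general n β hβ C₁ h h0 hlow
end
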